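/- On U = {(x,y) ∈ ℝ² : x > 0}, the metric g₃ given by the matrix G₃(x,y) = diag(x², x²) (i.e., g₃ = x²(dx² + dy²)) has Gauss curvature K = 1/x⁴ > 0, and the function k := √K = 1/x² satisfies the tensor equation (∇²k)_{ij} = (5/(2k)) ∂_i k ∂_j k − 2k³ (g₃)_{ij} on U. -/

import Mathlib

noncomputable section
open Matrix Real

/-- Points of the parameter domain `U ⊆ ℝ²`. -/
abbrev Pt : Type := Fin 2 → ℝ
/-- Vectors in `ℝ³`. -/
abbrev Vec3 : Type := Fin 3 → ℝ

/-- Partial derivative `∂ᵢ` of a scalar function on `ℝ²`. -/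
def pd (i : Fin 2) (f : Pt → ℝ) : Pt → ℝ :=
  fun p => fderiv ℝ f p (Pi.single i 1)

/-- Partial derivative `∂ᵢ` of an `ℝ³`-valued function on `ℝ²`. -/
def pdV (i : Fin 2) (f : Pt → Vec3) : Pt → Vec3 :=
  fun p => fderiv ℝ f p (Pi.single i 1)

/-- The induced metric (first fundamental form) `gᵢⱼ = ∂ᵢφ ⬝ ∂ⱼφ` of a map `φ : ℝ² → ℝ³`. -/
def indMetric (φ : Pt → Vec3) : Pt → Matrix (Fin 2) (Fin 2) ℝ :=
  fun p => Matrix.of fun i j => pdV i φ p ⬝ᵥ pdV j φ p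

/-- The unit normal `n = (∂₁φ × ∂₂φ)/‖∂₁φ × ∂₂φ‖`. -/
def unitNormal (φ : Pt → Vec3) : Pt → Vec3 :=
  fun p => (Real.sqrt ((crossProduct (pdV 0 φ p) (pdV 1 φ p)) ⬝ᵥ
      (crossProduct (pdV 0 φ p) (pdV 1 φ p))))⁻¹ •
    crossProduct (pdV 0 φ p) (pdV 1 φ p)

/-- The second fundamental form `hᵢⱼ = n ⬝ ∂ᵢ∂ⱼφ`. -/
def sff (φ : Pt → Vec3) : Pt → Matrix (Fin 2) (Fin 2) ℝ :=
  fun p => Matrix.of fun i j => unitNormal φ p ⬝ᵥ pdV i (pdV j φ) p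

/-- Christoffel symbols `Γ^k_{ij}` of a metric `g`. -/
def christoffel (g : Pt → Matrix (Fin 2) (Fin 2) ℝ) (k i j : Fin 2) : Pt → ℝ :=
  fun p => (1/2) * ∑ l, (g p)⁻¹ k l *
    (pd i (fun q => g q j l) p + pd j (fun q => g q i l) p - pd l (fun q => g q i j) p)

/-- Covariant derivative `∇ᵢ h_{jk}` of a symmetric 2-tensor `h` with respect to `g`. -/
def covD (g h : Pt → Matrix (Fin 2) (Fin 2) ℝ) (i j k : Fin 2) : Pt → ℝ :=
  fun p => pd i (fun q => h q j k) p
    - ∑ l, christoffel g l i j p * h p l k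
    - ∑ l, christoffel g l i k p * h p j l

/-- Covariant Hessian `(∇²u)ᵢⱼ = ∂ᵢ∂ⱼu − Σₖ Γ^k_{ij} ∂ₖu`. -/
def hess (g : Pt → Matrix (Fin 2) (Fin 2) ℝ) (u : Pt → ℝ) (i j : Fin 2) : Pt → ℝ :=
  fun p => pd i (pd j u) p - ∑ k, christoffel g k i j p * pd k u p

/-- The curvature component `R₁₂₁₂` of a metric `g` (indices `1,2` rendered as `0,1`). -/
def R1212 (g : Pt → Matrix (Fin 2) (Fin 2) ℝ) : Pt → ℝ :=
  fun p => ∑ m, g p 0 m *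
    (pd 0 (christoffel g m 1 1) p - pd 1 (christoffel g m 1 0) p +
      ∑ l, (christoffel g m 0 l p * christoffel g l 1 1 p -
            christoffel g m 1 l p * christoffel g l 1 0 p))

/-- The Gauss curvature `K = R₁₂₁₂ / det g` of a metric `g`. -/
def gaussK (g : Pt → Matrix (Fin 2) (Fin 2) ℝ) : Pt → ℝ :=
  fun p => R1212 g p / (g p).det

/-- The squared norm `|du|²_g = Σᵢⱼ g^{ij} ∂ᵢu ∂ⱼu`. -/
def gradSq (g : Pt → Matrix (Fin 2) (Fin 2) ℝ) (u : Pt → ℝ) : Pt → ℝ :=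
  fun p => ∑ i, ∑ j, (g p)⁻¹ i j * pd i u p * pd j u p

/-- `g` is a smooth Riemannian metric on `U`: smooth entries, symmetric and
positive definite at each point of `U`. -/
def IsMetricOn (g : Pt → Matrix (Fin 2) (Fin 2) ℝ) (U : Set Pt) : Prop :=
  (∀ i j, ContDiffOn ℝ (⊤ : ℕ∞) (fun p => g p i j) U) ∧
  (∀ p ∈ U, (g p).IsSymm ∧ (g p).PosDef)

/-- `φ` is a smooth immersion on `U`. -/
def IsImmersionOn (φ : Pt → Vec3) (U : Set Pt) : Prop :=
  ContDiffOn ℝ (⊤ : ℕ∞) φ U ∧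
  ∀ p ∈ U, LinearIndependent ℝ ![pdV 0 φ p, pdV 1 φ p]

/-- The model metric `g₃ = x²(dx² + dy²)` on the half-plane `x > 0`. -/
def modelG : Pt → Matrix (Fin 2) (Fin 2) ℝ :=
  fun q => !![(q 0) ^ 2, 0; 0, (q 0) ^ 2]

/-- The candidate square root of the (absolute) Gauss curvature. -/
def modelk : Pt → ℝ :=
  fun q => 1 / (q 0) ^ 2

/-! The metric `x²(dx² + dy²)` and the function `k = x⁻²` depend on `x` alone, so every `∂ᵢ`
reduces to `d/dx` (for `i = 0`) or to `0` (for `i = 1`). The only nonzero Christoffel symbols are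
`Γ⁰₀₀ = Γ¹₀₁ = Γ¹₁₀ = 1/x` and `Γ⁰₁₁ = -1/x`, which give `R₁₂₁₂ = 1` and `det g = x⁴`; the Hessian
identity is then a direct check with `∂ₓk = -2x⁻³` and `∂ₓ²k = 6x⁻⁴`. -/

lemma pd_comp_apply (h : ℝ → ℝ) (a i : Fin 2) (p : Pt) :
    pd i (fun q => h (q a)) p = (Pi.single i 1 : Pt) a * deriv h (p a) := by
  by_cases hh : DifferentiableAt ℝ h (p a)
  · have hF : HasFDerivAt (fun q : Pt => h (q a))
        (deriv h (p a) • ContinuousLinearMap.proj a) p :=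
      hh.hasDerivAt.comp_hasFDerivAt (f := fun q : Pt => q a) p
        (hasFDerivAt_apply (𝕜 := ℝ) (F' := fun _ => ℝ) a p)
    simp [pd, hF.fderiv, mul_comm]
  · -- Both sides are junk zeros: `h` is the restriction of `q ↦ h (q a)` to the line `update p a`.
    have hF : ¬ DifferentiableAt ℝ (fun q : Pt => h (q a)) p := fun hF => by
      have hline : (fun q : Pt => h (q a)) ∘ Function.update p a = h := funext fun t => by simp
      rw [← Function.update_eq_self a p] at hF
      exact hh (hline ▸ hF.comp (p a) (hasDerivAt_update p a (p a)).differentiableAt)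
    simp [pd, fderiv_zero_of_not_differentiableAt hF, deriv_zero_of_not_differentiableAt hh]

lemma pd_zero_comp_apply_zero (h : ℝ → ℝ) :
    pd 0 (fun q => h (q 0)) = fun q => deriv h (q 0) := by
  funext p; simp [pd_comp_apply]

lemma pd_one_comp_apply_zero (h : ℝ → ℝ) : pd 1 (fun q => h (q 0)) = 0 := by
  funext p; simp [pd_comp_apply]

lemma modelG_apply (q : Pt) (j l : Fin 2) :
    modelG q j l = (1 : Matrix (Fin 2) (Fin 2) ℝ) j l * q 0 ^ 2 := by
  fin_cases j <;> fin_cases l <;> simp [modelG]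

lemma pd_modelG_apply (i j l : Fin 2) (p : Pt) :
    pd i (fun q => modelG q j l) p =
      (1 : Matrix (Fin 2) (Fin 2) ℝ) j l * (Pi.single i 1 : Pt) 0 * (2 * p 0) := by
  simp only [modelG_apply]
  rw [pd_comp_apply (fun x => (1 : Matrix (Fin 2) (Fin 2) ℝ) j l * x ^ 2)]
  simp only [deriv_const_mul_field', deriv_pow_field]
  push_cast
  ring

lemma modelG_inv (q : Pt) : (modelG q)⁻¹ = !![(q 0 ^ 2)⁻¹, 0; 0, (q 0 ^ 2)⁻¹] := by
  rw [modelG, inv_def, adjugate_fin_two, det_fin_two]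
  rcases eq_or_ne (q 0) 0 with h0 | h0 <;>
    ext i j <;> fin_cases i <;> fin_cases j <;> simp [h0]

/-- `modelGamma k` is the matrix `(Γ^k_{ij})_{ij}` of `modelG`, as a function of `x`. -/
def modelGamma (k i j : Fin 2) (x : ℝ) : ℝ :=
  (![!![x⁻¹, 0; 0, -x⁻¹], !![0, x⁻¹; x⁻¹, 0]] : Fin 2 → Matrix (Fin 2) (Fin 2) ℝ) k i j

lemma christoffel_modelG (k i j : Fin 2) :
    christoffel modelG k i j = fun q => modelGamma k i j (q 0) := by
  funext q
  rcases eq_or_ne (q 0) 0 with h0 | h0 <;>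
  fin_cases k <;> fin_cases i <;> fin_cases j <;>
    simp [christoffel, Fin.sum_univ_two, modelG_inv, pd_modelG_apply, modelGamma, h0] <;>
    field_simp

lemma pd_zero_christoffel_modelG (k i j : Fin 2) :
    pd 0 (christoffel modelG k i j) = fun q => deriv (modelGamma k i j) (q 0) := by
  rw [christoffel_modelG, pd_zero_comp_apply_zero (modelGamma k i j)]

lemma pd_one_christoffel_modelG (k i j : Fin 2) : pd 1 (christoffel modelG k i j) = 0 := by
  rw [christoffel_modelG, pd_one_comp_apply_zero (modelGamma k i j)]

lemma deriv_modelGamma_zero_one_one (x : ℝ) : deriv (modelGamma 0 1 1) x = (x ^ 2)⁻¹ := by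
  have : modelGamma 0 1 1 = fun x => -x⁻¹ := by funext; simp [modelGamma]
  simp [this]

lemma R1212_modelG (p : Pt) (hp : p 0 ≠ 0) : R1212 modelG p = 1 := by
  simp only [R1212, Fin.sum_univ_two, pd_zero_christoffel_modelG, pd_one_christoffel_modelG,
    deriv_modelGamma_zero_one_one]
  simp [christoffel_modelG, modelGamma, modelG]
  field_simp

lemma gaussK_modelG (p : Pt) (hp : p 0 ≠ 0) : gaussK modelG p = 1 / p 0 ^ 4 := by
  rw [gaussK, R1212_modelG p hp, modelG, det_fin_two_of]
  ring

lemma modelk_eq_zpow : modelk = fun q => q 0 ^ (-2 : ℤ) := by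
  funext q; simp [modelk]

lemma pd_zero_modelk : pd 0 modelk = fun q => -2 * q 0 ^ (-3 : ℤ) := by
  rw [modelk_eq_zpow, pd_zero_comp_apply_zero (· ^ (-2 : ℤ)), deriv_zpow']
  norm_num

lemma pd_zero_pd_zero_modelk : pd 0 (pd 0 modelk) = fun q => 6 * q 0 ^ (-4 : ℤ) := by
  rw [pd_zero_modelk, pd_zero_comp_apply_zero (fun x => -2 * x ^ (-3 : ℤ))]
  funext q
  simp only [deriv_const_mul_field', deriv_zpow']
  norm_num
  ring

lemma pd_one_modelk : pd 1 modelk = 0 := by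
  rw [modelk_eq_zpow, pd_one_comp_apply_zero (· ^ (-2 : ℤ))]

lemma pd_one_pd_zero_modelk : pd 1 (pd 0 modelk) = 0 := by
  rw [pd_zero_modelk, pd_one_comp_apply_zero (fun x => -2 * x ^ (-3 : ℤ))]

lemma hess_modelG_modelk (p : Pt) (hp : p 0 ≠ 0) (i j : Fin 2) :
    hess modelG modelk i j p =
      (5 / (2 * modelk p)) * pd i modelk p * pd j modelk p - 2 * modelk p ^ 3 * modelG p i j := by
  have hpd_zero : ∀ i, pd i (0 : Pt → ℝ) = 0 := fun i => by funext; simp [pd]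
  fin_cases i <;> fin_cases j <;>
    simp only [Fin.zero_eta, Fin.mk_one, hess, Fin.sum_univ_two, pd_zero_pd_zero_modelk,
      pd_one_pd_zero_modelk, pd_one_modelk, hpd_zero] <;>
    simp only [pd_zero_modelk] <;>
    simp [christoffel_modelG, modelGamma, modelk, modelG]
  all_goals field_simp
  norm_num

/-- On the half-plane `x > 0`, the metric `g₃ = x²(dx² + dy²)` has Gauss curvature
`K = 1/x⁴ > 0` and `k = √K = 1/x²` satisfies the Darboux-integrability tensor equation
`(∇²k)ᵢⱼ = (5/(2k)) ∂ᵢk ∂ⱼk - 2k³ gᵢⱼ`. -/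
theorem model_metric_check_15 :
    ∀ p : Pt, 0 < p 0 →
      gaussK modelG p = 1 / (p 0) ^ 4 ∧
      0 < gaussK modelG p ∧
      modelk p = Real.sqrt ( (gaussK modelG p)) ∧
      (∀ i j : Fin 2,
        hess modelG modelk i j p =
          (5 / (2 * modelk p)) * pd i modelk p * pd j modelk p
            - 2 * modelk p ^ 3 * modelG p i j) := by
  intro p hp
  have hK := gaussK_modelG p hp.ne'
  refine ⟨hK, by rw [hK]; positivity, ?_, hess_modelG_modelk p hp.ne'⟩
  rw [hK, show (1 : ℝ) / p 0 ^ 4 = (1 / p 0 ^ 2) ^ 2 by ring, Real.sqrt_sq (by positivity), modelk]
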